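/- Let R be a prime unital ring. Then an element u of R is quasi-invertible if and only if u is left invertible or right invertible. Consequently, for a prime ring, R is a QB-ring if and only if for every a, b with Ra + Rb = R there is y such that a + yb is left or right invertible. -/
import Mathlib

section
variable {R : Type*} [Ring R]

/-- `x` and `y` are centrally orthogonal: `xRy = 0 = yRx`. -/
def CentOrth (x y : R) : Prop := ∀ r : R, x * r * y = 0 ∧ y * r * x = 0

/-- `u` is quasi-invertible. -/
def QuasiInv (u : R) : Prop := ∃ v : R, CentOrth (1 - u * v) (1 - v * u)

/-- `R` is a QB-ring. -/
def IsQBRing : Prop :=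
  ∀ a b : R, (∃ r s : R, r * a + s * b = 1) → ∃ y : R, QuasiInv (a + y * b)

/-- In a prime unital ring, quasi-invertible means left or right invertible; hence a
prime ring is a QB-ring iff `Ra + Rb = R` implies `a + yb` is left or right invertible
for some `y`. -/
theorem prime_quasiInvertible (hprime : ∀ x y : R, (∀ r : R, x * r * y = 0) → x = 0 ∨ y = 0) :
    (∀ u : R, QuasiInv u ↔ ((∃ v : R, v * u = 1) ∨ ∃ v : R, u * v = 1)) ∧
      (IsQBRing (R := R) ↔
        ∀ a b : R, (∃ r s : R, r * a + s * b = 1) →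
          ∃ y : R, (∃ v : R, v * (a + y * b) = 1) ∨ ∃ v : R, (a + y * b) * v = 1) := by
  have h1 : ∀ u : R, QuasiInv u ↔ ((∃ v : R, v * u = 1) ∨ ∃ v : R, u * v = 1) := by
    intro u
    constructor
    · rintro ⟨v, hv⟩
      rcases hprime (1 - u * v) (1 - v * u) (fun r => (hv r).1) with h | h
      · exact Or.inr ⟨v, (sub_eq_zero.mp h).symm⟩
      · exact Or.inl ⟨v, (sub_eq_zero.mp h).symm⟩
    · rintro (⟨v, hv⟩ | ⟨v, hv⟩)
      · exact ⟨v, fun r => by simp [hv]⟩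
      · exact ⟨v, fun r => by simp [hv]⟩
  refine ⟨h1, ⟨fun h a b hab => ?_, fun h a b hab => ?_⟩⟩
  · obtain ⟨y, hy⟩ := h a b hab
    exact ⟨y, (h1 _).mp hy⟩
  · obtain ⟨y, hy⟩ := h a b hab
    exact ⟨y, (h1 _).mpr hy⟩

end
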